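/- arXiv:0803.2839 — 4 statements merged into one kernel-verified Lean document; each statement's English description precedes it below -/
import Mathlib

section
/- Let s > 0 and let f, {f_λ : λ ∈ Λ} be as below. For any β ≥ s²/n + 2 sup_{λ∈Λ} ‖f − f_λ‖_n² and every μ' ∈ 𝒫'_Λ, the function μ ↦ exp( s² ‖f̄_{μ'} − f̄_μ‖_n² / (n β²) − ‖f − f̄_μ‖_n² / β ) is concave on the convex set 𝒫'_Λ, i.e. for all μ, μ̃ ∈ 𝒫'_Λ, G((μ + μ̃)/2) ≥ (G(μ) + G(μ̃))/2 where G denotes this function. -/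
/-!
Writing `y = (f(xᵢ))ᵢ`, `b = f̄_{μ'}` and `c = s²/(nβ) ≤ 1`, `log G(μ)` is the concave quadratic
`φ u = (c‖b - u‖² - ‖y - u‖²)/(nβ)` of `u = f̄_μ ∈ ℝⁿ`, and `f̄` is affine in `μ`. For `v = m - h`,
`w = m + h` one finds `φ m = (φ v + φ w)/2 + d` with `d = (1 - c)‖h‖²/(nβ)`, and
`φ v - φ w = 4⟪c(b - m) - (y - m), h⟫/(nβ)`. By Jensen all of `b, v, w` lie in the ball of radius
`r = √(n sup_λ ‖f - f_λ‖ₙ²)` about `y`, hence so does the convex combination `cb + (1 - c)m`;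
Cauchy–Schwarz and `2r² ≤ nβ(1 - c)` give `(φ v - φ w)² ≤ 8d`, which is exactly what
`(eᵖ + e^q)/2 = e^{(p+q)/2} cosh((p - q)/2) ≤ e^{(p+q)/2 + (p-q)²/8}` needs.
-/

open MeasureTheory ProbabilityTheory
open scoped ENNReal NNReal

noncomputable section

/-- Empirical squared norm `‖v‖ₙ² = n⁻¹ ∑ᵢ vᵢ²`. -/
def normSqV (n : ℕ) (v : Fin n → ℝ) : ℝ := (∑ i, v i ^ 2) / n

/-- Exponential weight `θ_λ(Y)`. -/
def expWeight {X Λ : Type*} [MeasurableSpace Λ] (n : ℕ) (x : Fin n → X)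
    (F : Λ → X → ℝ) (π : Measure Λ) (β : ℝ) (Y : Fin n → ℝ) (l : Λ) : ℝ :=
  Real.exp (-(n : ℝ) * normSqV n (fun i => Y i - F l (x i)) / β) /
    ∫ w, Real.exp (-(n : ℝ) * normSqV n (fun i => Y i - F w (x i)) / β) ∂π

/-- Exponentially weighted aggregate `f̂ₙ` evaluated at a point. -/
def aggregate {X Λ : Type*} [MeasurableSpace Λ] (n : ℕ) (x : Fin n → X)
    (F : Λ → X → ℝ) (π : Measure Λ) (β : ℝ) (Y : Fin n → ℝ) (pt : X) : ℝ :=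
  ∫ l, expWeight n x F π β Y l * F l pt ∂π

open Classical in
/-- Kullback–Leibler divergence `𝒦(p,π)`, equal to `⊤` when undefined. -/
def klDiv {α : Type*} [MeasurableSpace α] (p q : Measure α) : EReal :=
  if p ≪ q ∧ Integrable (fun a => Real.log (p.rnDeriv q a).toReal) p
  then ((∫ a, Real.log (p.rnDeriv q a).toReal ∂p : ℝ) : EReal)
  else ⊤

/-- The set `𝒫'_Λ` of probability measures `μ` on `Λ` making `λ ↦ f_λ(xᵢ)`
`μ`-integrable for every design point. -/
def PPrime {X Λ : Type*} [MeasurableSpace Λ] (n : ℕ) (x : Fin n → X)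
    (F : Λ → X → ℝ) : Set (Measure Λ) :=
  {μ | IsProbabilityMeasure μ ∧ ∀ i : Fin n, Integrable (fun l => F l (x i)) μ}

/-- `f̄_μ(xᵢ) = ∫ f_λ(xᵢ) μ(dλ)`. -/
def barF {X Λ : Type*} [MeasurableSpace Λ] (n : ℕ) (x : Fin n → X)
    (F : Λ → X → ℝ) (μ : Measure Λ) (i : Fin n) : ℝ :=
  ∫ l, F l (x i) ∂μ

/-- The functional `G(μ) = exp(s²‖f̄_{μ'} − f̄_μ‖ₙ²/(nβ²) − ‖f − f̄_μ‖ₙ²/β)`. -/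
def Gfun {X Λ : Type*} [MeasurableSpace Λ] (n : ℕ) (x : Fin n → X) (f : X → ℝ)
    (F : Λ → X → ℝ) (s β : ℝ) (μ' μ : Measure Λ) : ℝ :=
  Real.exp (s ^ 2 * (normSqV n fun i => barF n x F μ' i - barF n x F μ i) / (n * β ^ 2)
    - (normSqV n fun i => f (x i) - barF n x F μ i) / β)

open Real Metric
open scoped InnerProductSpace RealInnerProductSpace

theorem Real.exp_add_exp_div_two_le {p q d : ℝ} (h : (p - q) ^ 2 ≤ 8 * d) :
    (exp p + exp q) / 2 ≤ exp ((p + q) / 2 + d) := by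
  have hcosh : (exp p + exp q) / 2 = exp ((p + q) / 2) * cosh ((p - q) / 2) := by
    rw [cosh_eq, ← neg_div, neg_sub, mul_div, mul_add, ← exp_add, ← exp_add]
    ring_nf
  rw [hcosh, exp_add]
  gcongr
  exact (cosh_le_exp_half_sq _).trans (exp_le_exp.2 (by linarith))

section InnerProductSpace

variable {E : Type*} [NormedAddCommGroup E] [InnerProductSpace ℝ E]

theorem exp_quadratic_midpoint_le {y b v w : E} {c β r : ℝ} (hβ : 0 < β) (hc0 : 0 ≤ c)
    (hc1 : c ≤ 1) (hb : b ∈ closedBall y r) (hv : v ∈ closedBall y r) (hw : w ∈ closedBall y r)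
    (hr : 2 * r ^ 2 ≤ β * (1 - c)) :
    (exp ((c * ‖b - v‖ ^ 2 - ‖y - v‖ ^ 2) / β) + exp ((c * ‖b - w‖ ^ 2 - ‖y - w‖ ^ 2) / β)) / 2
      ≤ exp ((c * ‖b - midpoint ℝ v w‖ ^ 2 - ‖y - midpoint ℝ v w‖ ^ 2) / β) := by
  set m := midpoint ℝ v w
  set h := m - v
  have hsub_v (a : E) : a - v = (a - m) + h := by simp [h]
  have hsub_w (a : E) : a - w = (a - m) - h := by
    rw [show h = w - m by simp only [h, m, midpoint_sub_left, right_sub_midpoint]]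
    abel
  set z := c • (b - m) - (y - m)
  have hz : ‖z‖ ≤ r := by
    have hm : m ∈ closedBall y r := (convex_closedBall y r).midpoint_mem hv hw
    have hcomb := convex_closedBall y r hb hm hc0 (sub_nonneg.2 hc1) (add_sub_cancel c 1)
    rwa [mem_closedBall_iff_norm, show c • b + (1 - c) • m - y = z by module] at hcomb
  have hnorm_v (a : E) : ‖a - v‖ ^ 2 = ‖a - m‖ ^ 2 + 2 * ⟪a - m, h⟫ + ‖h‖ ^ 2 := by
    rw [hsub_v, norm_add_sq_real]
  have hnorm_w (a : E) : ‖a - w‖ ^ 2 = ‖a - m‖ ^ 2 - 2 * ⟪a - m, h⟫ + ‖h‖ ^ 2 := by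
    rw [hsub_w, norm_sub_sq_real]
  set p := (c * ‖b - v‖ ^ 2 - ‖y - v‖ ^ 2) / β
  set q := (c * ‖b - w‖ ^ 2 - ‖y - w‖ ^ 2) / β
  have hmid : (c * ‖b - m‖ ^ 2 - ‖y - m‖ ^ 2) / β = (p + q) / 2 + (1 - c) * ‖h‖ ^ 2 / β := by
    simp only [p, q, hnorm_v, hnorm_w]
    field_simp
    ring
  have hdiff : p - q = 4 * ⟪z, h⟫ / β := by
    simp only [p, q, z, hnorm_v, hnorm_w, inner_sub_left, real_inner_smul_left]
    field_simp
    ring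
  have hzh : ⟪z, h⟫ ^ 2 ≤ r ^ 2 * ‖h‖ ^ 2 := by
    rw [← mul_pow, ← sq_abs]
    exact pow_le_pow_left₀ (abs_nonneg _)
      ((abs_real_inner_le_norm z h).trans (mul_le_mul_of_nonneg_right hz (norm_nonneg h))) 2
  rw [hmid]
  refine Real.exp_add_exp_div_two_le ?_
  calc (p - q) ^ 2 = 16 * ⟪z, h⟫ ^ 2 / β ^ 2 := by rw [hdiff]; ring
    _ ≤ 16 * (β * (1 - c) / 2 * ‖h‖ ^ 2) / β ^ 2 := by
        gcongr
        exact hzh.trans (mul_le_mul_of_nonneg_right (by linarith) (sq_nonneg _))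
    _ = 8 * ((1 - c) * ‖h‖ ^ 2 / β) := by field_simp; ring

end InnerProductSpace

section Aggregation

variable {X Λ : Type*} [MeasurableSpace Λ] {n : ℕ}

theorem normSqV_sub_eq (a b : Fin n → ℝ) :
    normSqV n (fun i => a i - b i) = ‖WithLp.toLp 2 a - WithLp.toLp 2 b‖ ^ 2 / n := by
  simp [normSqV, ← WithLp.toLp_sub, EuclideanSpace.norm_sq_eq]

theorem Gfun_eq_exp (hn : n ≠ 0) {β : ℝ} (hβ : β ≠ 0) (x : Fin n → X) (f : X → ℝ)
    (F : Λ → X → ℝ) (s : ℝ) (μ' μ : Measure Λ) :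
    Gfun n x f F s β μ' μ =
      exp ((s ^ 2 / (n * β) * ‖WithLp.toLp 2 (barF n x F μ') - WithLp.toLp 2 (barF n x F μ)‖ ^ 2
        - ‖WithLp.toLp 2 (fun i => f (x i)) - WithLp.toLp 2 (barF n x F μ)‖ ^ 2) / (n * β)) := by
  rw [Gfun, normSqV_sub_eq, normSqV_sub_eq (fun i => f (x i))]
  congr 1
  field_simp

theorem toLp_barF_eq_integral {x : Fin n → X} {F : Λ → X → ℝ} {μ : Measure Λ}
    (hF : ∀ i, Integrable (fun l => F l (x i)) μ) :
    WithLp.toLp 2 (barF n x F μ) =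
      ∫ l, (WithLp.toLp 2 (fun i => F l (x i)) : EuclideanSpace ℝ (Fin n)) ∂μ := by
  ext i
  rw [eval_integral_piLp hF]
  rfl

theorem toLp_barF_mem_closedBall {x : Fin n → X} {F : Λ → X → ℝ} {μ : Measure Λ}
    (hμ : μ ∈ PPrime n x F) {y : EuclideanSpace ℝ (Fin n)} {r : ℝ}
    (hr : ∀ l, WithLp.toLp 2 (fun i => F l (x i)) ∈ closedBall y r) :
    WithLp.toLp 2 (barF n x F μ) ∈ closedBall y r := by
  have := hμ.1
  rw [toLp_barF_eq_integral hμ.2]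
  exact (convex_closedBall y r).integral_mem isClosed_closedBall (.of_forall hr)
    (Integrable.of_eval_piLp hμ.2)

theorem toLp_barF_half_smul_add {x : Fin n → X} {F : Λ → X → ℝ} {μ₁ μ₂ : Measure Λ}
    (h₁ : ∀ i, Integrable (fun l => F l (x i)) μ₁) (h₂ : ∀ i, Integrable (fun l => F l (x i)) μ₂) :
    WithLp.toLp 2 (barF n x F ((2 : ℝ≥0∞)⁻¹ • (μ₁ + μ₂))) =
      midpoint ℝ (WithLp.toLp 2 (barF n x F μ₁)) (WithLp.toLp 2 (barF n x F μ₂)) := by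
  ext i
  simp only [barF]
  rw [integral_smul_measure, integral_add_measure (h₁ i) (h₂ i)]
  simp [midpoint_eq_smul_add, barF, mul_add]

end Aggregation

theorem Gfun_concave_general
    {X Λ : Type*} [MeasurableSpace Λ]
    (n : ℕ) (hn : 0 < n) (x : Fin n → X) (f : X → ℝ)
    (F : Λ → X → ℝ)
    (hbdd : BddAbove (Set.range fun l => normSqV n fun i => f (x i) - F l (x i)))
    (s : ℝ) (hs : 0 < s)
    (β : ℝ)
    (hβ : s ^ 2 / n + 2 * (⨆ l : Λ, normSqV n fun i => f (x i) - F l (x i)) ≤ β)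
    (μ' : Measure Λ) (hμ' : μ' ∈ PPrime n x F) :
    ∀ μ₁ ∈ PPrime n x F, ∀ μ₂ ∈ PPrime n x F,
      (Gfun n x f F s β μ' μ₁ + Gfun n x f F s β μ' μ₂) / 2
        ≤ Gfun n x f F s β μ' ((2 : ℝ≥0∞)⁻¹ • (μ₁ + μ₂)) := by
  intro μ₁ hμ₁ μ₂ hμ₂
  set M := ⨆ l : Λ, normSqV n fun i => f (x i) - F l (x i)
  have hn' : (0 : ℝ) < n := Nat.cast_pos.2 hn
  have hM : 0 ≤ M := Real.iSup_nonneg fun l => by unfold normSqV; positivity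
  have hβn : s ^ 2 + n * (2 * M) ≤ n * β := by
    simpa [mul_add, mul_div_cancel₀ _ hn'.ne'] using mul_le_mul_of_nonneg_left hβ hn'.le
  have hsn : s ^ 2 ≤ n * β := by nlinarith
  have hβ0 : 0 < β := pos_of_mul_pos_right ((pow_pos hs 2).trans_le hsn) hn'.le
  have hball : ∀ μ ∈ PPrime n x F, WithLp.toLp 2 (barF n x F μ) ∈
      closedBall (WithLp.toLp 2 fun i => f (x i)) √(n * M) := fun μ hμ =>
    toLp_barF_mem_closedBall hμ fun l => by
      rw [mem_closedBall', dist_eq_norm, le_sqrt (norm_nonneg _) (by positivity),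
        ← div_le_iff₀' hn', ← normSqV_sub_eq]
      exact le_ciSup hbdd l
  rw [Gfun_eq_exp hn.ne' hβ0.ne', Gfun_eq_exp hn.ne' hβ0.ne', Gfun_eq_exp hn.ne' hβ0.ne',
    toLp_barF_half_smul_add hμ₁.2 hμ₂.2]
  refine exp_quadratic_midpoint_le (by positivity) (by positivity)
    ((div_le_one (by positivity)).2 hsn) (hball μ' hμ') (hball μ₁ hμ₁) (hball μ₂ hμ₂) ?_
  rw [sq_sqrt (by positivity), mul_one_sub, mul_div_cancel₀ _ (by positivity)]
  linarith

/-- Lemma 3 of the paper: for `β ≥ s²/n + 2 sup_λ ‖f − f_λ‖ₙ²`, the map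
`μ ↦ exp(s²‖f̄_{μ'} − f̄_μ‖ₙ²/(nβ²) − ‖f − f̄_μ‖ₙ²/β)` is (midpoint) concave on `𝒫'_Λ`. -/
theorem Gfun_concave
    {X Λ : Type*} [MeasurableSpace Λ]
    (n : ℕ) (hn : 0 < n) (x : Fin n → X) (f : X → ℝ)
    (F : Λ → X → ℝ) (hFm : ∀ i, Measurable fun l => F l (x i))
    (hbdd : BddAbove (Set.range fun l => normSqV n fun i => f (x i) - F l (x i)))
    (s : ℝ) (hs : 0 < s)
    (β : ℝ)
    (hβ : s ^ 2 / n + 2 * (⨆ l : Λ, normSqV n fun i => f (x i) - F l (x i)) ≤ β)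
    (μ' : Measure Λ) (hμ' : μ' ∈ PPrime n x F) :
    ∀ μ₁ ∈ PPrime n x F, ∀ μ₂ ∈ PPrime n x F,
      (Gfun n x f F s β μ' μ₁ + Gfun n x f F s β μ' μ₂) / 2
        ≤ Gfun n x f F s β μ' ((2 : ℝ≥0∞)⁻¹ • (μ₁ + μ₂)) :=
  Gfun_concave_general n hn x f F hbdd s hs β hβ μ' hμ'
end
end

section
/- Let π ∈ 𝒫_Λ be such that for all Y' ∈ ℝⁿ and β > 0 the mappings λ ↦ θ_λ(Y') f_λ²(x_i), i = 1,…,n, are π-integrable. Then the map Y ↦ f̂_n(Y) := (f̂_n(x_1, Y),…,f̂_n(x_n, Y))ᵀ is continuously differentiable and, for each i = 1,…,n, its partial derivative with respect to the i-th coordinate Y_i satisfies ∂_i f̂_n(x_i, Y) = (2/β) ( ∫_Λ f_λ²(x_i) θ_λ(Y) π(dλ) − f̂_n²(x_i, Y) ) = (2/β) ∫_Λ ( f_λ(x_i) − f̂_n(x_i, Y) )² θ_λ(Y) π(dλ) ≥ 0. -/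
/-!
With `w_λ(Y) = exp(-∑ⱼ (Yⱼ - f_λ(xⱼ))²/β)` the aggregate is the ratio
`∫ w_λ(Y) f_λ(xᵢ) π(dλ) / ∫ w_λ(Y) π(dλ)`. Since `s e^{-s/β} ≤ β`, the integrands
`w_λ`, `w_λ f_λ(xᵢ)`, `w_λ f_λ(xᵢ)²` and the `Y`-derivatives of the first two are bounded locally
uniformly in `Y`, so both integrals are `C¹` and may be differentiated under the integral sign. As `∂ᵢ w_λ = -(2/β)(Yᵢ - f_λ(xᵢ)) w_λ`, the quotient rule turns
`∂ᵢ f̂ₙ(xᵢ, Y)` into `2/β` times the variance of `f_λ(xᵢ)` under `θ_λ(Y) π(dλ)`.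
-/

open MeasureTheory ProbabilityTheory
open scoped ENNReal NNReal

noncomputable section

open Filter

theorem HasFDerivAt.div_apply {𝕜 E : Type*} [NontriviallyNormedField 𝕜] [NormedAddCommGroup E]
    [NormedSpace 𝕜 E] {f g : E → 𝕜} {f' g' : E →L[𝕜] 𝕜} {y : E}
    (hf : HasFDerivAt f f' y) (hg : HasFDerivAt g g' y) (hy : g y ≠ 0) (v : E) :
    fderiv 𝕜 (fun y => f y / g y) y v = (f' v * g y - f y * g' v) / g y ^ 2 := by
  have h : HasFDerivAt (fun y => f y * (g y)⁻¹) _ y := hf.mul ((hasFDerivAt_inv hy).comp y hg)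
  simp only [div_eq_mul_inv]
  rw [h.fderiv]
  simp only [add_apply, smul_apply, ContinuousLinearMap.comp_apply,
    ContinuousLinearMap.toSpanSingleton_apply, smul_eq_mul, mul_neg]
  field_simp
  ring

section ParametricIntegral

variable {α E G : Type*} [MeasurableSpace α] {μ : Measure α} [IsFiniteMeasure μ]
  [NormedAddCommGroup E] [NormedSpace ℝ E] [NormedAddCommGroup G] [NormedSpace ℝ G]
  {f : E → α → G} {f' : E → α → E →L[ℝ] G} {bound : E → ℝ}

theorem hasFDerivAt_integral_of_fderiv_le_continuous
    (hf_meas : ∀ y, AEStronglyMeasurable (f y) μ) (hf_int : ∀ y, Integrable (f y) μ)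
    (hf'_meas : ∀ y, AEStronglyMeasurable (f' y) μ)
    (hdiff : ∀ y a, HasFDerivAt (f · a) (f' y a) y)
    (hbound_cont : Continuous bound) (hbound : ∀ y a, ‖f' y a‖ ≤ bound y) (y₀ : E) :
    HasFDerivAt (fun y => ∫ a, f y a ∂μ) (∫ a, f' y₀ a ∂μ) y₀ := by
  obtain ⟨s, hs, hs_bound⟩ := (hbound_cont.continuousAt.eventually_lt continuousAt_const
    (lt_add_one (bound y₀))).exists_mem
  exact hasFDerivAt_integral_of_dominated_of_fderiv_le hs (.of_forall hf_meas) (hf_int y₀)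
    (hf'_meas y₀) (.of_forall fun a y hy => (hbound y a).trans (hs_bound y hy).le)
    (integrable_const _) (.of_forall fun a y _ => hdiff y a)

theorem contDiff_one_integral_of_fderiv_le_continuous
    (hf_meas : ∀ y, AEStronglyMeasurable (f y) μ) (hf_int : ∀ y, Integrable (f y) μ)
    (hf'_meas : ∀ y, AEStronglyMeasurable (f' y) μ)
    (hdiff : ∀ y a, HasFDerivAt (f · a) (f' y a) y) (hf'_cont : ∀ a, Continuous (f' · a))
    (hbound_cont : Continuous bound) (hbound : ∀ y a, ‖f' y a‖ ≤ bound y) :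
    ContDiff ℝ 1 (fun y => ∫ a, f y a ∂μ) := by
  have hderiv := hasFDerivAt_integral_of_fderiv_le_continuous hf_meas hf_int hf'_meas hdiff
    hbound_cont hbound
  refine contDiff_one_iff_fderiv.mpr ⟨fun y => (hderiv y).differentiableAt, ?_⟩
  rw [funext fun y => (hderiv y).fderiv]
  refine continuous_iff_continuousAt.mpr fun y₀ => ?_
  obtain ⟨s, hs, hs_bound⟩ := (hbound_cont.continuousAt.eventually_lt continuousAt_const
    (lt_add_one (bound y₀))).exists_mem
  exact continuousAt_of_dominated (.of_forall hf'_meas)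
    (eventually_of_mem hs fun y hy => .of_forall fun a => (hbound y a).trans (hs_bound y hy).le)
    (integrable_const _) (.of_forall fun a => (hf'_cont a).continuousAt)

end ParametricIntegral

theorem integral_sub_integral_sq_mul {α : Type*} [MeasurableSpace α] {μ : Measure α}
    {θ f : α → ℝ} (hθ : Integrable θ μ) (hθf : Integrable (fun a => θ a * f a) μ)
    (hf2θ : Integrable (fun a => f a ^ 2 * θ a) μ) (hθ1 : ∫ a, θ a ∂μ = 1) :
    ∫ a, (f a - ∫ b, θ b * f b ∂μ) ^ 2 * θ a ∂μ
      = ∫ a, f a ^ 2 * θ a ∂μ - (∫ a, θ a * f a ∂μ) ^ 2 := by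
  set c := ∫ b, θ b * f b ∂μ
  have hexpand : (fun a => (f a - c) ^ 2 * θ a)
      = fun a => f a ^ 2 * θ a - 2 * c * (θ a * f a) + c ^ 2 * θ a := by
    ext a; ring
  rw [hexpand, integral_add, integral_sub hf2θ (hθf.const_mul _), integral_const_mul,
    integral_const_mul, hθ1]
  · ring
  · exact hf2θ.sub (hθf.const_mul _)
  · exact hθ.const_mul _

theorem ContinuousLinearMap.norm_proj_le {ι : Type*} [Fintype ι] (j : ι) :
    ‖ContinuousLinearMap.proj (R := ℝ) (φ := fun _ : ι => ℝ) j‖ ≤ 1 :=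
  ContinuousLinearMap.opNorm_le_bound _ zero_le_one fun v => by
    simpa using norm_le_pi_norm v j

theorem norm_sum_smul_proj_le {ι : Type*} [Fintype ι] (c : ι → ℝ) :
    ‖∑ j, c j • ContinuousLinearMap.proj (R := ℝ) (φ := fun _ : ι => ℝ) j‖ ≤ ∑ j, |c j| := by
  refine (norm_sum_le _ _).trans (Finset.sum_le_sum fun j _ => ?_)
  rw [norm_smul, Real.norm_eq_abs]
  exact mul_le_of_le_one_right (abs_nonneg _) (ContinuousLinearMap.norm_proj_le j)

theorem sq_le_sum_sq {ι : Type*} [Fintype ι] (a : ι → ℝ) (j : ι) : a j ^ 2 ≤ ∑ k, a k ^ 2 :=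
  Finset.single_le_sum (fun k _ => sq_nonneg (a k)) (Finset.mem_univ j)

theorem abs_le_one_add_sum_sq {ι : Type*} [Fintype ι] (a : ι → ℝ) (j : ι) :
    |a j| ≤ 1 + ∑ k, a k ^ 2 := by
  nlinarith [sq_le_sum_sq a j, sq_abs (a j), sq_nonneg (|a j| - 1)]

theorem abs_mul_abs_le_sum_sq {ι : Type*} [Fintype ι] (a : ι → ℝ) (i j : ι) :
    |a i| * |a j| ≤ ∑ k, a k ^ 2 := by
  nlinarith [sq_le_sum_sq a i, sq_le_sum_sq a j, sq_abs (a i), sq_abs (a j),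
    sq_nonneg (|a i| - |a j|)]

theorem mul_exp_neg_div_le {β : ℝ} (hβ : 0 < β) (s : ℝ) : s * Real.exp (-s / β) ≤ β := by
  have hs : s / β * Real.exp (-s / β) ≤ 1 := by
    rw [neg_div, ← le_div_iff₀ (Real.exp_pos _), Real.exp_neg, div_inv_eq_mul, one_mul]
    linarith [Real.add_one_le_exp (s / β)]
  rwa [div_mul_eq_mul_div, div_le_one hβ] at hs

section GibbsWeight

variable {n : ℕ}

/-- The unnormalised weight `exp(-n‖Y - v‖ₙ²/β)` of the prediction vector `v = (f_λ(xⱼ))ⱼ`. -/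
def gibbsWeight (β : ℝ) (v Y : Fin n → ℝ) : ℝ :=
  Real.exp (-(∑ j, (Y j - v j) ^ 2) / β)

def gibbsWeightDeriv (β : ℝ) (v Y : Fin n → ℝ) : (Fin n → ℝ) →L[ℝ] ℝ :=
  (-(2 / β) * gibbsWeight β v Y) • ∑ j, (Y j - v j) • ContinuousLinearMap.proj j

variable {β : ℝ} {v Y : Fin n → ℝ}

@[fun_prop]
theorem Continuous.gibbsWeight {α : Type*} [TopologicalSpace α] {v Y : α → Fin n → ℝ}
    (hv : Continuous v) (hY : Continuous Y) : Continuous fun a => gibbsWeight β (v a) (Y a) := by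
  unfold _root_.gibbsWeight
  fun_prop

@[fun_prop]
theorem Continuous.gibbsWeightDeriv {α : Type*} [TopologicalSpace α] {v Y : α → Fin n → ℝ}
    (hv : Continuous v) (hY : Continuous Y) :
    Continuous fun a => gibbsWeightDeriv β (v a) (Y a) := by
  unfold _root_.gibbsWeightDeriv
  fun_prop

theorem gibbsWeight_pos : 0 < gibbsWeight β v Y := Real.exp_pos _

theorem gibbsWeight_le_one (hβ : 0 ≤ β) : gibbsWeight β v Y ≤ 1 := by
  rw [gibbsWeight, Real.exp_le_one_iff, neg_div, neg_nonpos]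
  positivity

theorem sum_sq_mul_gibbsWeight_le (hβ : 0 < β) :
    (∑ j, (Y j - v j) ^ 2) * gibbsWeight β v Y ≤ β :=
  mul_exp_neg_div_le hβ _

theorem one_add_sum_sq_mul_gibbsWeight_le (hβ : 0 < β) :
    (1 + ∑ j, (Y j - v j) ^ 2) * gibbsWeight β v Y ≤ 1 + β := by
  rw [add_mul, one_mul]
  exact add_le_add (gibbsWeight_le_one hβ.le) (sum_sq_mul_gibbsWeight_le hβ)

theorem abs_mul_gibbsWeight_le (hβ : 0 < β) (i : Fin n) :
    |v i| * gibbsWeight β v Y ≤ |Y i| + (1 + β) := by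
  have hv : |v i| ≤ |Y i| + (1 + ∑ j, (Y j - v j) ^ 2) := by
    linarith [abs_sub_abs_le_abs_sub (v i) (Y i), abs_sub_comm (v i) (Y i),
      abs_le_one_add_sum_sq (fun j => Y j - v j) i]
  calc |v i| * gibbsWeight β v Y
      ≤ |Y i| * gibbsWeight β v Y + (1 + ∑ j, (Y j - v j) ^ 2) * gibbsWeight β v Y := by
        rw [← add_mul]
        exact mul_le_mul_of_nonneg_right hv gibbsWeight_pos.le
    _ ≤ |Y i| + (1 + β) :=
        add_le_add (mul_le_of_le_one_right (abs_nonneg _) (gibbsWeight_le_one hβ.le))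
          (one_add_sum_sq_mul_gibbsWeight_le hβ)

theorem sq_mul_gibbsWeight_le (hβ : 0 < β) (i : Fin n) :
    v i ^ 2 * gibbsWeight β v Y ≤ 2 * Y i ^ 2 + 2 * β := by
  have hv : v i ^ 2 ≤ 2 * Y i ^ 2 + 2 * ∑ j, (Y j - v j) ^ 2 := by
    nlinarith [sq_le_sum_sq (fun j => Y j - v j) i, sq_nonneg (Y i + (Y i - v i))]
  nlinarith [mul_le_mul_of_nonneg_right hv (gibbsWeight_pos (β := β) (v := v) (Y := Y)).le,
    sum_sq_mul_gibbsWeight_le (v := v) (Y := Y) hβ,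
    mul_le_of_le_one_right (sq_nonneg (Y i)) (gibbsWeight_le_one (v := v) (Y := Y) hβ.le)]

theorem hasFDerivAt_gibbsWeight (β : ℝ) (v Y : Fin n → ℝ) :
    HasFDerivAt (gibbsWeight β v) (gibbsWeightDeriv β v Y) Y := by
  have hsum : HasFDerivAt (fun Y : Fin n → ℝ => ∑ j, (Y j - v j) ^ 2)
      (∑ j, (2 * (Y j - v j)) • ContinuousLinearMap.proj (R := ℝ) (φ := fun _ : Fin n => ℝ) j)
      Y := by
    refine HasFDerivAt.fun_sum fun j _ => ?_
    simpa using ((hasFDerivAt_apply j Y).sub_const (v j)).pow 2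
  have hfun : gibbsWeight β v = fun Y' => Real.exp (-β⁻¹ * ∑ j, (Y' j - v j) ^ 2) := by
    ext Y'
    simp only [gibbsWeight, div_eq_inv_mul, mul_neg, neg_mul]
  rw [hfun]
  refine (hsum.const_mul (-β⁻¹)).exp.congr_fderiv ?_
  rw [← congrFun hfun Y]
  simp only [gibbsWeightDeriv, Finset.smul_sum, smul_smul]
  refine Finset.sum_congr rfl fun j _ => ?_
  congr 1
  ring

theorem gibbsWeightDeriv_apply_single (i : Fin n) :
    gibbsWeightDeriv β v Y (Pi.single i 1) = -(2 / β) * gibbsWeight β v Y * (Y i - v i) := by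
  simp [gibbsWeightDeriv, Pi.single_apply]

theorem norm_gibbsWeightDeriv_le_sum (hβ : 0 < β) :
    ‖gibbsWeightDeriv β v Y‖ ≤ 2 / β * ∑ j, |Y j - v j| * gibbsWeight β v Y := by
  rw [gibbsWeightDeriv, norm_smul, Real.norm_eq_abs, abs_mul, abs_neg,
    abs_of_pos (by positivity : 0 < 2 / β), abs_of_pos gibbsWeight_pos, mul_assoc,
    ← Finset.sum_mul, mul_comm (gibbsWeight β v Y)]
  exact mul_le_mul_of_nonneg_left (mul_le_mul_of_nonneg_right
    (norm_sum_smul_proj_le (fun j => Y j - v j)) gibbsWeight_pos.le) (by positivity)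

theorem norm_gibbsWeightDeriv_le (hβ : 0 < β) :
    ‖gibbsWeightDeriv β v Y‖ ≤ 2 / β * n * (1 + β) := by
  have h (j : Fin n) : |Y j - v j| * gibbsWeight β v Y ≤ 1 + β :=
    (mul_le_mul_of_nonneg_right (abs_le_one_add_sum_sq (fun k => Y k - v k) j)
      gibbsWeight_pos.le).trans (one_add_sum_sq_mul_gibbsWeight_le hβ)
  calc ‖gibbsWeightDeriv β v Y‖ ≤ 2 / β * ∑ j, |Y j - v j| * gibbsWeight β v Y :=
        norm_gibbsWeightDeriv_le_sum hβ
    _ ≤ 2 / β * ∑ _j : Fin n, (1 + β) := by gcongr with j; exact h j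
    _ = 2 / β * n * (1 + β) := by rw [Fin.sum_const, nsmul_eq_mul, mul_assoc]

theorem norm_smul_gibbsWeightDeriv_le (hβ : 0 < β) (i : Fin n) :
    ‖v i • gibbsWeightDeriv β v Y‖ ≤ 2 / β * n * (|Y i| * (1 + β) + β) := by
  have hw := gibbsWeight_pos (β := β) (v := v) (Y := Y)
  have h (j : Fin n) : |v i| * (|Y j - v j| * gibbsWeight β v Y) ≤ |Y i| * (1 + β) + β := by
    have hrj := abs_le_one_add_sum_sq (fun k => Y k - v k) j
    have hrirj := abs_mul_abs_le_sum_sq (fun k => Y k - v k) i j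
    have hw₁ := one_add_sum_sq_mul_gibbsWeight_le (v := v) (Y := Y) hβ
    have hw₂ := sum_sq_mul_gibbsWeight_le (v := v) (Y := Y) hβ
    calc |v i| * (|Y j - v j| * gibbsWeight β v Y)
        ≤ (|Y i| * |Y j - v j| + |Y i - v i| * |Y j - v j|) * gibbsWeight β v Y := by
          rw [← add_mul, ← mul_assoc]
          gcongr
          linarith [abs_sub_abs_le_abs_sub (v i) (Y i), abs_sub_comm (v i) (Y i)]
      _ ≤ (|Y i| * (1 + ∑ k, (Y k - v k) ^ 2) + ∑ k, (Y k - v k) ^ 2) * gibbsWeight β v Y := by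
          gcongr
      _ ≤ |Y i| * (1 + β) + β := by
          rw [add_mul, mul_assoc]
          gcongr
  calc ‖v i • gibbsWeightDeriv β v Y‖
      ≤ |v i| * (2 / β * ∑ j, |Y j - v j| * gibbsWeight β v Y) := by
        rw [norm_smul, Real.norm_eq_abs]
        gcongr
        exact norm_gibbsWeightDeriv_le_sum hβ
    _ = 2 / β * ∑ j, |v i| * (|Y j - v j| * gibbsWeight β v Y) := by
        rw [Finset.mul_sum, Finset.mul_sum, Finset.mul_sum]
        congr 1
        ext j
        ring
    _ ≤ 2 / β * ∑ _j : Fin n, (|Y i| * (1 + β) + β) := by gcongr with j; exact h j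
    _ = 2 / β * n * (|Y i| * (1 + β) + β) := by rw [Fin.sum_const, nsmul_eq_mul, mul_assoc]

end GibbsWeight

section GibbsIntegral

variable {n : ℕ} {Λ : Type*} [MeasurableSpace Λ]

def gibbsMean (π : Measure Λ) (V : Λ → Fin n → ℝ) (β : ℝ) (Y : Fin n → ℝ) (i : Fin n) : ℝ :=
  (∫ l, gibbsWeight β (V l) Y * V l i ∂π) / ∫ l, gibbsWeight β (V l) Y ∂π

variable {π : Measure Λ} {V : Λ → Fin n → ℝ} {β : ℝ}

theorem aestronglyMeasurable_gibbsWeightDeriv (hV : Measurable V) (Y : Fin n → ℝ) :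
    AEStronglyMeasurable (fun l => gibbsWeightDeriv β (V l) Y) π :=
  (by fun_prop : Continuous fun v => gibbsWeightDeriv β v Y).comp_aestronglyMeasurable
    hV.aestronglyMeasurable

theorem aestronglyMeasurable_smul_gibbsWeightDeriv (hV : Measurable V) (Y : Fin n → ℝ)
    (i : Fin n) : AEStronglyMeasurable (fun l => V l i • gibbsWeightDeriv β (V l) Y) π :=
  (by fun_prop : Continuous fun v => v i • gibbsWeightDeriv β v Y).comp_aestronglyMeasurable
    hV.aestronglyMeasurable

variable [IsFiniteMeasure π]

theorem integrable_gibbsWeight (hV : Measurable V) (hβ : 0 ≤ β) (Y : Fin n → ℝ) :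
    Integrable (fun l => gibbsWeight β (V l) Y) π :=
  .of_bound ((by fun_prop : Continuous fun v => gibbsWeight β v Y).comp_aestronglyMeasurable
    hV.aestronglyMeasurable) 1 (.of_forall fun l => by
      rw [Real.norm_eq_abs, abs_of_pos gibbsWeight_pos]; exact gibbsWeight_le_one hβ)

theorem integrable_gibbsWeight_mul (hV : Measurable V) (hβ : 0 < β) (Y : Fin n → ℝ)
    (i : Fin n) : Integrable (fun l => gibbsWeight β (V l) Y * V l i) π :=
  .of_bound ((by fun_prop : Continuous fun v => gibbsWeight β v Y * v i)
      |>.comp_aestronglyMeasurable hV.aestronglyMeasurable)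
    (|Y i| + (1 + β)) (.of_forall fun l => by
      rw [Real.norm_eq_abs, abs_mul, abs_of_pos gibbsWeight_pos, mul_comm]
      exact abs_mul_gibbsWeight_le hβ i)

theorem integrable_sq_mul_gibbsWeight (hV : Measurable V) (hβ : 0 < β) (Y : Fin n → ℝ)
    (i : Fin n) : Integrable (fun l => V l i ^ 2 * gibbsWeight β (V l) Y) π :=
  .of_bound ((by fun_prop : Continuous fun v => v i ^ 2 * gibbsWeight β v Y)
      |>.comp_aestronglyMeasurable hV.aestronglyMeasurable)
    (2 * Y i ^ 2 + 2 * β) (.of_forall fun l => by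
      rw [Real.norm_eq_abs, abs_of_nonneg (mul_nonneg (sq_nonneg _) gibbsWeight_pos.le)]
      exact sq_mul_gibbsWeight_le hβ i)

theorem integral_gibbsWeight_pos [NeZero π] (hV : Measurable V) (hβ : 0 ≤ β) (Y : Fin n → ℝ) :
    0 < ∫ l, gibbsWeight β (V l) Y ∂π := by
  rw [integral_pos_iff_support_of_nonneg (fun l => gibbsWeight_pos.le)
    (integrable_gibbsWeight hV hβ Y), Function.support_eq_univ fun l => gibbsWeight_pos.ne']
  exact Measure.measure_univ_pos.mpr (NeZero.ne π)

theorem hasFDerivAt_integral_gibbsWeight (hV : Measurable V) (hβ : 0 < β) (Y : Fin n → ℝ) :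
    HasFDerivAt (fun Y => ∫ l, gibbsWeight β (V l) Y ∂π)
      (∫ l, gibbsWeightDeriv β (V l) Y ∂π) Y :=
  hasFDerivAt_integral_of_fderiv_le_continuous
    (fun Y => (integrable_gibbsWeight hV hβ.le Y).aestronglyMeasurable)
    (integrable_gibbsWeight hV hβ.le) (aestronglyMeasurable_gibbsWeightDeriv hV)
    (fun Y l => hasFDerivAt_gibbsWeight β (V l) Y) continuous_const
    (fun _ _ => norm_gibbsWeightDeriv_le hβ) Y

theorem contDiff_integral_gibbsWeight (hV : Measurable V) (hβ : 0 < β) :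
    ContDiff ℝ 1 (fun Y => ∫ l, gibbsWeight β (V l) Y ∂π) :=
  contDiff_one_integral_of_fderiv_le_continuous
    (fun Y => (integrable_gibbsWeight hV hβ.le Y).aestronglyMeasurable)
    (integrable_gibbsWeight hV hβ.le) (aestronglyMeasurable_gibbsWeightDeriv hV)
    (fun Y l => hasFDerivAt_gibbsWeight β (V l) Y) (fun l => by fun_prop) continuous_const
    (fun _ _ => norm_gibbsWeightDeriv_le hβ)

theorem hasFDerivAt_integral_gibbsWeight_mul (hV : Measurable V) (hβ : 0 < β) (i : Fin n)
    (Y : Fin n → ℝ) :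
    HasFDerivAt (fun Y => ∫ l, gibbsWeight β (V l) Y * V l i ∂π)
      (∫ l, V l i • gibbsWeightDeriv β (V l) Y ∂π) Y :=
  hasFDerivAt_integral_of_fderiv_le_continuous
    (fun Y => (integrable_gibbsWeight_mul hV hβ Y i).aestronglyMeasurable)
    (integrable_gibbsWeight_mul hV hβ · i)
    (aestronglyMeasurable_smul_gibbsWeightDeriv hV · i)
    (fun Y l => (hasFDerivAt_gibbsWeight β (V l) Y).mul_const (V l i)) (by fun_prop)
    (fun _ _ => norm_smul_gibbsWeightDeriv_le hβ i) Y

theorem contDiff_integral_gibbsWeight_mul (hV : Measurable V) (hβ : 0 < β) (i : Fin n) :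
    ContDiff ℝ 1 (fun Y => ∫ l, gibbsWeight β (V l) Y * V l i ∂π) :=
  contDiff_one_integral_of_fderiv_le_continuous
    (fun Y => (integrable_gibbsWeight_mul hV hβ Y i).aestronglyMeasurable)
    (integrable_gibbsWeight_mul hV hβ · i)
    (aestronglyMeasurable_smul_gibbsWeightDeriv hV · i)
    (fun Y l => (hasFDerivAt_gibbsWeight β (V l) Y).mul_const (V l i)) (fun l => by fun_prop)
    (by fun_prop) (fun _ _ => norm_smul_gibbsWeightDeriv_le hβ i)

theorem integral_gibbsWeightDeriv_apply_single (hV : Measurable V) (hβ : 0 < β)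
    (Y : Fin n → ℝ) (i : Fin n) :
    (∫ l, gibbsWeightDeriv β (V l) Y ∂π) (Pi.single i 1)
      = -(2 / β) * (Y i * ∫ l, gibbsWeight β (V l) Y ∂π
          - ∫ l, gibbsWeight β (V l) Y * V l i ∂π) := by
  have hint : Integrable (fun l => gibbsWeightDeriv β (V l) Y) π :=
    .of_bound (aestronglyMeasurable_gibbsWeightDeriv hV Y) _
      (.of_forall fun _ => norm_gibbsWeightDeriv_le hβ)
  rw [ContinuousLinearMap.integral_apply hint]
  have h : ∀ l, gibbsWeightDeriv β (V l) Y (Pi.single i 1)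
      = -(2 / β) * (gibbsWeight β (V l) Y * Y i - gibbsWeight β (V l) Y * V l i) := by
    intro l
    rw [gibbsWeightDeriv_apply_single]
    ring
  simp only [h]
  rw [integral_const_mul, integral_sub ((integrable_gibbsWeight hV hβ.le Y).mul_const _)
    (integrable_gibbsWeight_mul hV hβ Y i), integral_mul_const, mul_comm (Y i)]

theorem integral_smul_gibbsWeightDeriv_apply_single (hV : Measurable V) (hβ : 0 < β)
    (Y : Fin n → ℝ) (i : Fin n) :
    (∫ l, V l i • gibbsWeightDeriv β (V l) Y ∂π) (Pi.single i 1)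
      = -(2 / β) * (Y i * ∫ l, gibbsWeight β (V l) Y * V l i ∂π
          - ∫ l, V l i ^ 2 * gibbsWeight β (V l) Y ∂π) := by
  have hint : Integrable (fun l => V l i • gibbsWeightDeriv β (V l) Y) π :=
    .of_bound (aestronglyMeasurable_smul_gibbsWeightDeriv hV Y i) _
      (.of_forall fun _ => norm_smul_gibbsWeightDeriv_le hβ i)
  rw [ContinuousLinearMap.integral_apply hint]
  have h : ∀ l, (V l i • gibbsWeightDeriv β (V l) Y) (Pi.single i 1)
      = -(2 / β) * (gibbsWeight β (V l) Y * V l i * Y i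
          - V l i ^ 2 * gibbsWeight β (V l) Y) := by
    intro l
    rw [smul_apply, gibbsWeightDeriv_apply_single, smul_eq_mul]
    ring
  simp only [h]
  rw [integral_const_mul, integral_sub ((integrable_gibbsWeight_mul hV hβ Y i).mul_const _)
    (integrable_sq_mul_gibbsWeight hV hβ Y i), integral_mul_const, mul_comm (Y i)]

variable [NeZero π]

theorem contDiff_gibbsMean (hV : Measurable V) (hβ : 0 < β) (i : Fin n) :
    ContDiff ℝ 1 fun Y => gibbsMean π V β Y i :=
  (contDiff_integral_gibbsWeight_mul hV hβ i).div (contDiff_integral_gibbsWeight hV hβ)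
    fun Y => (integral_gibbsWeight_pos hV hβ.le Y).ne'

theorem fderiv_gibbsMean_apply_single (hV : Measurable V) (hβ : 0 < β) (Y : Fin n → ℝ)
    (i : Fin n) :
    fderiv ℝ (fun Y => gibbsMean π V β Y i) Y (Pi.single i 1)
      = 2 / β * ((∫ l, V l i ^ 2 * gibbsWeight β (V l) Y ∂π) / ∫ l, gibbsWeight β (V l) Y ∂π
          - gibbsMean π V β Y i ^ 2) := by
  have hZ := (integral_gibbsWeight_pos (π := π) hV hβ.le Y).ne'
  unfold gibbsMean
  rw [HasFDerivAt.div_apply (hasFDerivAt_integral_gibbsWeight_mul hV hβ i Y)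
    (hasFDerivAt_integral_gibbsWeight hV hβ Y) hZ,
    integral_smul_gibbsWeightDeriv_apply_single hV hβ, integral_gibbsWeightDeriv_apply_single hV hβ]
  field_simp
  ring

end GibbsIntegral

theorem neg_mul_normSqV {n : ℕ} (v : Fin n → ℝ) : -(n : ℝ) * normSqV n v = -∑ i, v i ^ 2 := by
  rcases Nat.eq_zero_or_pos n with rfl | hn
  · simp
  · rw [normSqV]
    field_simp

section Aggregate

variable {X Λ : Type*} [MeasurableSpace Λ] {n : ℕ} {x : Fin n → X} {F : Λ → X → ℝ}
  {π : Measure Λ} {β : ℝ}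

theorem expWeight_eq_div (Y : Fin n → ℝ) :
    expWeight n x F π β Y = fun l => gibbsWeight β (fun j => F l (x j)) Y /
      ∫ w, gibbsWeight β (fun j => F w (x j)) Y ∂π := by
  ext l
  simp only [expWeight, neg_mul_normSqV, gibbsWeight, neg_div]

theorem expWeight_nonneg (Y : Fin n → ℝ) (l : Λ) : 0 ≤ expWeight n x F π β Y l :=
  div_nonneg (Real.exp_pos _).le (integral_nonneg fun _ => (Real.exp_pos _).le)

theorem aggregate_eq_gibbsMean (Y : Fin n → ℝ) (i : Fin n) :
    aggregate n x F π β Y (x i) = gibbsMean π (fun l j => F l (x j)) β Y i := by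
  simp only [aggregate, expWeight_eq_div, gibbsMean, div_mul_eq_mul_div]
  exact integral_div _ _

theorem integral_sq_mul_expWeight (Y : Fin n → ℝ) (i : Fin n) :
    ∫ l, F l (x i) ^ 2 * expWeight n x F π β Y l ∂π
      = (∫ l, F l (x i) ^ 2 * gibbsWeight β (fun j => F l (x j)) Y ∂π)
          / ∫ l, gibbsWeight β (fun j => F l (x j)) Y ∂π := by
  simp only [expWeight_eq_div, mul_div_assoc']
  exact integral_div _ _

theorem integral_sub_aggregate_sq_mul_expWeight [IsFiniteMeasure π] [NeZero π]
    (hFm : ∀ i, Measurable fun l => F l (x i)) (hβ : 0 < β) (Y : Fin n → ℝ) (i : Fin n) :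
    ∫ l, (F l (x i) - aggregate n x F π β Y (x i)) ^ 2 * expWeight n x F π β Y l ∂π
      = ∫ l, F l (x i) ^ 2 * expWeight n x F π β Y l ∂π - aggregate n x F π β Y (x i) ^ 2 := by
  have hV : Measurable fun l j => F l (x j) := measurable_pi_lambda _ hFm
  have hθ : Integrable (expWeight n x F π β Y) π := by
    rw [expWeight_eq_div]
    exact (integrable_gibbsWeight hV hβ.le Y).div_const _
  have hθF : Integrable (fun l => expWeight n x F π β Y l * F l (x i)) π := by
    simp only [expWeight_eq_div, div_mul_eq_mul_div]
    exact (integrable_gibbsWeight_mul hV hβ Y i).div_const _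
  have hF2θ : Integrable (fun l => F l (x i) ^ 2 * expWeight n x F π β Y l) π := by
    simp only [expWeight_eq_div, mul_div_assoc']
    exact (integrable_sq_mul_gibbsWeight hV hβ Y i).div_const _
  have hθ1 : ∫ l, expWeight n x F π β Y l ∂π = 1 := by
    rw [expWeight_eq_div, integral_div, div_self (integral_gibbsWeight_pos hV hβ.le Y).ne']
  exact integral_sub_integral_sq_mul hθ hθF hF2θ hθ1

end Aggregate

theorem aggregate_partial_derivative_general
    {X Λ : Type*} [MeasurableSpace Λ]
    (n : ℕ) (x : Fin n → X)
    (F : Λ → X → ℝ) (hFm : ∀ i, Measurable fun l => F l (x i))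
    (π : Measure Λ) [IsProbabilityMeasure π]
    (β : ℝ) (hβ : 0 < β) :
    ContDiff ℝ 1 (fun Y : Fin n → ℝ => fun i => aggregate n x F π β Y (x i)) ∧
    ∀ (Y : Fin n → ℝ) (i : Fin n),
      fderiv ℝ (fun Y' : Fin n → ℝ => aggregate n x F π β Y' (x i)) Y (Pi.single i 1)
          = (2 / β) * ((∫ l, (F l (x i)) ^ 2 * expWeight n x F π β Y l ∂π)
              - (aggregate n x F π β Y (x i)) ^ 2) ∧
      fderiv ℝ (fun Y' : Fin n → ℝ => aggregate n x F π β Y' (x i)) Y (Pi.single i 1)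
          = (2 / β) * ∫ l, (F l (x i) - aggregate n x F π β Y (x i)) ^ 2
              * expWeight n x F π β Y l ∂π ∧
      0 ≤ fderiv ℝ (fun Y' : Fin n → ℝ => aggregate n x F π β Y' (x i)) Y
            (Pi.single i 1) := by
  have hV : Measurable fun l j => F l (x j) := measurable_pi_lambda _ hFm
  have hagg (i : Fin n) : (fun Y => aggregate n x F π β Y (x i))
      = fun Y => gibbsMean π (fun l j => F l (x j)) β Y i :=
    funext fun Y => aggregate_eq_gibbsMean Y i
  refine ⟨contDiff_pi.mpr fun i => hagg i ▸ contDiff_gibbsMean hV hβ i, fun Y i => ?_⟩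
  have hderiv : fderiv ℝ (fun Y' => aggregate n x F π β Y' (x i)) Y (Pi.single i 1)
      = 2 / β * ((∫ l, F l (x i) ^ 2 * expWeight n x F π β Y l ∂π)
          - aggregate n x F π β Y (x i) ^ 2) := by
    rw [hagg i, fderiv_gibbsMean_apply_single hV hβ, integral_sq_mul_expWeight,
      aggregate_eq_gibbsMean]
  have hvar := integral_sub_aggregate_sq_mul_expWeight (π := π) hFm hβ Y i
  refine ⟨hderiv, by rw [hderiv, hvar], ?_⟩
  rw [hderiv, ← hvar]
  exact mul_nonneg (by positivity)
    (integral_nonneg fun l => mul_nonneg (sq_nonneg _) (expWeight_nonneg Y l))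

/-- Differentiability of the exponentially weighted aggregate and the formula for its
partial derivatives (from the proof of Theorem 1 of the paper): `Y ↦ f̂ₙ(Y)` is
continuously differentiable and
`∂ᵢ f̂ₙ(xᵢ,Y) = (2/β)(∫ f_λ²(xᵢ)θ_λ(Y)π(dλ) − f̂ₙ²(xᵢ,Y))
             = (2/β)∫ (f_λ(xᵢ) − f̂ₙ(xᵢ,Y))²θ_λ(Y)π(dλ) ≥ 0`. -/
theorem aggregate_partial_derivative
    {X Λ : Type*} [MeasurableSpace Λ]
    (n : ℕ) (hn : 0 < n) (x : Fin n → X)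
    (F : Λ → X → ℝ) (hFm : ∀ i, Measurable fun l => F l (x i))
    (π : Measure Λ) [IsProbabilityMeasure π]
    (hπint : ∀ (Y' : Fin n → ℝ) (β' : ℝ), 0 < β' → ∀ i,
      Integrable (fun l => expWeight n x F π β' Y' l * (F l (x i)) ^ 2) π)
    (β : ℝ) (hβ : 0 < β) :
    ContDiff ℝ 1 (fun Y : Fin n → ℝ => fun i => aggregate n x F π β Y (x i)) ∧
    ∀ (Y : Fin n → ℝ) (i : Fin n),
      fderiv ℝ (fun Y' : Fin n → ℝ => aggregate n x F π β Y' (x i)) Y (Pi.single i 1)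
          = (2 / β) * ((∫ l, (F l (x i)) ^ 2 * expWeight n x F π β Y l ∂π)
              - (aggregate n x F π β Y (x i)) ^ 2) ∧
      fderiv ℝ (fun Y' : Fin n → ℝ => aggregate n x F π β Y' (x i)) Y (Pi.single i 1)
          = (2 / β) * ∫ l, (F l (x i) - aggregate n x F π β Y (x i)) ^ 2
              * expWeight n x F π β Y l ∂π ∧
      0 ≤ fderiv ℝ (fun Y' : Fin n → ℝ => aggregate n x F π β Y' (x i)) Y
            (Pi.single i 1) :=
  aggregate_partial_derivative_general n x F hFm π β hβ
end
end

section
/- Let n ≥ 1 be an integer and σ > 0, and define L_ζ(t) = 1 + (2n+1)σ² t² / (2n² − (n+1)² σ² t²). Then for all t with |t| ≤ n/((n+1)σ), one has log L_ζ(t) ≤ (2n+1)(σ t / n)². -/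
/-!
The constraint on `|t|` says `((n+1)σt)² ≤ n²`, so the denominator of `L t` is at least `n²`;
combined with `log (1 + y) ≤ y` this gives the bound.
-/

open Real

lemma Real.log_one_add_div_le_div {a d e : ℝ} (ha : 0 ≤ a) (he : 0 < e) (hed : e ≤ d) :
    log (1 + a / d) ≤ a / e := by
  have hd : 0 < d := he.trans_le hed
  calc log (1 + a / d) ≤ a / d := by
        linarith [log_le_sub_one_of_pos (by positivity : 0 < 1 + a / d)]
    _ ≤ a / e := div_le_div_of_nonneg_left ha he hed

lemma sq_mul_le_sq_of_abs_le_div {b c t : ℝ} (hc : 0 < c) (h : |t| ≤ b / c) :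
    (c * t) ^ 2 ≤ b ^ 2 := by
  have hct : |c * t| ≤ b := by
    rw [abs_mul, abs_of_pos hc, mul_comm]
    exact (le_div_iff₀ hc).mp h
  simpa only [sq_abs] using pow_le_pow_left₀ (abs_nonneg _) hct 2

/-- The moment generating function bound for the "dummy" noise associated with the
double exponential (Laplace) distribution: with
`L_ζ(t) = 1 + (2n+1)σ²t²/(2n² − (n+1)²σ²t²)`, one has
`log L_ζ(t) ≤ (2n+1)(σt/n)²` whenever `|t| ≤ n/((n+1)σ)`. -/
theorem log_mgf_laplace_dummy_bound (n : ℕ) (hn : 1 ≤ n) (σ : ℝ) (hσ : 0 < σ)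
    (L : ℝ → ℝ)
    (hL : ∀ t, L t = 1 + (2 * n + 1) * σ ^ 2 * t ^ 2 /
      (2 * (n : ℝ) ^ 2 - ((n : ℝ) + 1) ^ 2 * σ ^ 2 * t ^ 2))
    (t : ℝ) (ht : |t| ≤ (n : ℝ) / (((n : ℝ) + 1) * σ)) :
    Real.log (L t) ≤ (2 * n + 1) * (σ * t / n) ^ 2 := by
  have hn₀ : (0 : ℝ) < n := by exact_mod_cast hn
  have hx : (((n : ℝ) + 1) * σ * t) ^ 2 ≤ (n : ℝ) ^ 2 :=
    sq_mul_le_sq_of_abs_le_div (by positivity) ht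
  have hden : (n : ℝ) ^ 2 ≤ 2 * (n : ℝ) ^ 2 - ((n : ℝ) + 1) ^ 2 * σ ^ 2 * t ^ 2 := by
    rw [mul_pow, mul_pow] at hx
    linarith
  rw [hL]
  convert log_one_add_div_le_div (a := (2 * n + 1) * σ ^ 2 * t ^ 2) (by positivity)
    (by positivity) hden using 1
  ring
end

section
/- Let ξ be a real random variable with E(e^{t|ξ|^κ}) ≤ B for some constants t > 0, κ > 0, B > 0. Let n ≥ e^{1/κ} and set α = (2(log n)/t)^{2/κ}. Then E( (ξ² − α)₊ ) ≤ B α / n². -/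
/-!
Put `β = (2 log n / t)^{1/κ}`, so that `β² = α` and `e^{t β^κ} = n²`. Since `n ≥ e^{1/κ}` gives
`t κ β^κ ≥ 2`, the function `y ↦ y² e^{-t y^κ}` is decreasing on `[β, ∞)`, so
`(ξ² − α)₊ ≤ β² e^{-t β^κ} e^{t |ξ|^κ} = (α / n²) e^{t |ξ|^κ}` pointwise; integrate.
-/

open MeasureTheory

namespace Real

/-- With `u = (y/β)^κ`, this is `2 log (y/β) = (2/κ) log u ≤ (2/κ)(u - 1) ≤ t β^κ (u - 1)`. -/
theorem sq_le_sq_mul_exp_sub_rpow {y β t κ : ℝ} (hβ : 0 < β) (hβy : β ≤ y) (hκ : 0 < κ)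
    (hcrit : 2 ≤ t * κ * β ^ κ) :
    y ^ 2 ≤ β ^ 2 * exp (t * (y ^ κ - β ^ κ)) := by
  have hy : 0 < y := hβ.trans_le hβy
  have hβκ : 0 < β ^ κ := rpow_pos_of_pos hβ κ
  set u := (y / β) ^ κ with hu
  have hu1 : 1 ≤ u := one_le_rpow ((one_le_div hβ).2 hβy) hκ.le
  have hyκ : y ^ κ = u * β ^ κ := by
    rw [hu, div_rpow hy.le hβ.le, div_mul_cancel₀ _ hβκ.ne']
  have hlog : κ * log (y / β) = log u := (log_rpow (div_pos hy hβ) κ).symm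
  have hlog_le : 2 * log (y / β) ≤ t * (y ^ κ - β ^ κ) := by
    have hu_log : log u ≤ u - 1 := log_le_sub_one_of_pos (by linarith)
    rw [← hlog] at hu_log
    rw [hyκ]
    nlinarith [mul_le_mul_of_nonneg_right hcrit (sub_nonneg.2 hu1)]
  calc y ^ 2 = β ^ 2 * exp (2 * log (y / β)) := by
        rw [mul_comm 2, exp_mul, exp_log (div_pos hy hβ), rpow_two, div_pow]
        field_simp
    _ ≤ β ^ 2 * exp (t * (y ^ κ - β ^ κ)) := by gcongr

theorem max_sq_sub_sq_le_mul_exp_rpow_abs (x : ℝ) {β t κ : ℝ} (hβ : 0 < β) (hκ : 0 < κ)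
    (hcrit : 2 ≤ t * κ * β ^ κ) :
    max (x ^ 2 - β ^ 2) 0 ≤ β ^ 2 * exp (-(t * β ^ κ)) * exp (t * |x| ^ κ) := by
  rcases le_or_gt (x ^ 2) (β ^ 2) with hsmall | hlarge
  · rw [max_eq_right (by linarith)]
    positivity
  · have hβx : β ≤ |x| := by
      simpa only [abs_of_pos hβ] using (sq_lt_sq.1 hlarge).le
    calc max (x ^ 2 - β ^ 2) 0 ≤ |x| ^ 2 := by
          rw [max_eq_left (by linarith), sq_abs]; nlinarith
      _ ≤ β ^ 2 * exp (t * (|x| ^ κ - β ^ κ)) := sq_le_sq_mul_exp_sub_rpow hβ hβx hκ hcrit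
      _ = β ^ 2 * exp (-(t * β ^ κ)) * exp (t * |x| ^ κ) := by
          rw [mul_assoc, ← exp_add]; ring_nf

end Real

theorem MeasureTheory.integral_max_sq_sub_sq_le {Ω : Type*} [MeasurableSpace Ω] (μ : Measure Ω)
    (ξ : Ω → ℝ) {β t κ : ℝ} (hβ : 0 < β) (hκ : 0 < κ) (hcrit : 2 ≤ t * κ * β ^ κ)
    (hint : Integrable (fun ω => Real.exp (t * |ξ ω| ^ κ)) μ) :
    ∫ ω, max (ξ ω ^ 2 - β ^ 2) 0 ∂μ
      ≤ β ^ 2 * Real.exp (-(t * β ^ κ)) * ∫ ω, Real.exp (t * |ξ ω| ^ κ) ∂μ := by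
  rw [← integral_const_mul]
  exact integral_mono_of_nonneg (.of_forall fun _ => le_max_right _ _) (hint.const_mul _)
    (.of_forall fun ω => Real.max_sq_sub_sq_le_mul_exp_rpow_abs (ξ ω) hβ hκ hcrit)

theorem truncated_second_moment_bound_general
    {Ω : Type*} [MeasurableSpace Ω] (P : Measure Ω)
    (ξ : Ω → ℝ)
    (t κ B : ℝ) (ht : 0 < t) (hκ : 0 < κ)
    (hint : Integrable (fun ω => Real.exp (t * |ξ ω| ^ κ)) P)
    (hmom : ∫ ω, Real.exp (t * |ξ ω| ^ κ) ∂P ≤ B)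
    (n : ℕ) (hn : Real.exp (1 / κ) ≤ (n : ℝ))
    (α : ℝ) (hα : α = (2 * Real.log n / t) ^ ((2 : ℝ) / κ)) :
    ∫ ω, max (ξ ω ^ 2 - α) 0 ∂P ≤ B * α / (n : ℝ) ^ 2 := by
  have hn0 : (0 : ℝ) < n := (Real.exp_pos _).trans_le hn
  have hlog : 1 / κ ≤ Real.log n := (Real.le_log_iff_exp_le hn0).2 hn
  have hbase : 0 < 2 * Real.log n / t := by
    have : 0 < Real.log n := (one_div_pos.2 hκ).trans_le hlog
    positivity
  set β := (2 * Real.log n / t) ^ κ⁻¹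
  have hβ : 0 < β := Real.rpow_pos_of_pos hbase _
  have hβκ : t * β ^ κ = 2 * Real.log n := by
    rw [Real.rpow_inv_rpow hbase.le hκ.ne', mul_div_cancel₀ _ ht.ne']
  have hβα : β ^ 2 = α := by
    rw [hα, ← Real.rpow_two, ← Real.rpow_mul hbase.le, inv_mul_eq_div]
  have hexp : Real.exp (-(t * β ^ κ)) = 1 / (n : ℝ) ^ 2 := by
    rw [hβκ, Real.exp_neg, mul_comm, Real.exp_mul, Real.exp_log hn0, Real.rpow_two, one_div]
  have hcrit : 2 ≤ t * κ * β ^ κ := by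
    rw [mul_right_comm, hβκ]
    nlinarith [(div_le_iff₀ hκ).1 hlog]
  calc ∫ ω, max (ξ ω ^ 2 - α) 0 ∂P
      ≤ α * (1 / (n : ℝ) ^ 2) * ∫ ω, Real.exp (t * |ξ ω| ^ κ) ∂P := by
        simpa only [hβα, hexp] using integral_max_sq_sub_sq_le P ξ hβ hκ hcrit hint
    _ ≤ α * (1 / (n : ℝ) ^ 2) * B := by
        have : 0 ≤ α := hβα ▸ sq_nonneg β
        gcongr
    _ = B * α / (n : ℝ) ^ 2 := by ring

/-- If `E exp(t|ξ|^κ) ≤ B`, `n ≥ e^{1/κ}` and `α = (2 log n / t)^{2/κ}`, then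
`E (ξ² − α)₊ ≤ B α / n²`. -/
theorem truncated_second_moment_bound
    {Ω : Type*} [MeasurableSpace Ω] (P : Measure Ω) [IsProbabilityMeasure P]
    (ξ : Ω → ℝ) (hξm : Measurable ξ)
    (t κ B : ℝ) (ht : 0 < t) (hκ : 0 < κ) (hB : 0 < B)
    (hint : Integrable (fun ω => Real.exp (t * |ξ ω| ^ κ)) P)
    (hmom : ∫ ω, Real.exp (t * |ξ ω| ^ κ) ∂P ≤ B)
    (n : ℕ) (hn : Real.exp (1 / κ) ≤ (n : ℝ))
    (α : ℝ) (hα : α = (2 * Real.log n / t) ^ ((2 : ℝ) / κ)) :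
    ∫ ω, max (ξ ω ^ 2 - α) 0 ∂P ≤ B * α / (n : ℝ) ^ 2 :=
  truncated_second_moment_bound_general P ξ t κ B ht hκ hint hmom n hn α hα
end
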